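/- Let (𝒮, μ) be a defining pair in Q, A = KQ/I the algebra defined by it, and f : KQ → K the linear map with f(p) = 1 if p = C^{μ(C)} for some C ∈ 𝒮 and f(p) = 0 for all other paths p. Then f(xy) = f(yx) for all x, y ∈ KQ. -/

import Mathlib

/-!  A model of the path algebra `KQ` of a finite quiver `Q` (vertex set `V`,
arrow set `A`, source and target maps `s t : A → V`), as the quotient of the
free algebra on `V ⊕ A` by the usual path-algebra relations.  -/

open FreeAlgebra

inductive PathRel (K V A : Type) [Field K] [Fintype V] [DecidableEq V] (s t : A → V) :
    FreeAlgebra K (V ⊕ A) → FreeAlgebra K (V ⊕ A) → Prop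
  | vtxMul : ∀ v w : V,
      PathRel K V A s t (ι K (Sum.inl v) * ι K (Sum.inl w))
        (if v = w then ι K (Sum.inl v) else 0)
  | unit : PathRel K V A s t (∑ v : V, ι K (Sum.inl v)) 1
  | src : ∀ a : A,
      PathRel K V A s t (ι K (Sum.inl (s a)) * ι K (Sum.inr a)) (ι K (Sum.inr a))
  | tgt : ∀ a : A,
      PathRel K V A s t (ι K (Sum.inr a) * ι K (Sum.inl (t a))) (ι K (Sum.inr a))

/-- The path algebra `KQ`. -/
abbrev PathAlg (K V A : Type) [Field K] [Fintype V] [DecidableEq V] (s t : A → V) : Type :=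
  RingQuot (PathRel K V A s t)

section

variable (K V A : Type) [Field K] [Fintype V] [DecidableEq V] (s t : A → V)

/-- The element of `KQ` corresponding to an arrow. -/
noncomputable def arrow (a : A) : PathAlg K V A s t :=
  RingQuot.mkAlgHom K (PathRel K V A s t) (ι K (Sum.inr a))

/-- The idempotent of `KQ` corresponding to a vertex (trivial path). -/
noncomputable def vtx (v : V) : PathAlg K V A s t :=
  RingQuot.mkAlgHom K (PathRel K V A s t) (ι K (Sum.inl v))

/-- The element of `KQ` given by a path, recorded as its list of arrows. -/
noncomputable def pathElem (l : List A) : PathAlg K V A s t :=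
  (l.map (arrow K V A s t)).prod

/-- The ideal `J²`, where `J` is the arrow ideal: it is generated by the
products of two arrows (equivalently, by the paths of length 2). -/
def JSqIdeal : TwoSidedIdeal (PathAlg K V A s t) :=
  TwoSidedIdeal.span {x | ∃ a b : A, x = arrow K V A s t a * arrow K V A s t b}

/-- An ideal `I` of `KQ` is admissible if `J^N ⊆ I ⊆ J²` for some `N ≥ 2`;
`J^N ⊆ I` amounts to all paths of length `N` lying in `I`. -/
def Admissible (I : TwoSidedIdeal (PathAlg K V A s t)) : Prop :=
  ∃ N : ℕ, 2 ≤ N ∧ (∀ l : List A, l.length = N → pathElem K V A s t l ∈ I) ∧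
    I ≤ JSqIdeal K V A s t

/-- Condition (M): for every arrow `a` there is at most one arrow `b` with
`ab ∉ I` and at most one arrow `c` with `ca ∉ I`. -/
def ConditionM (I : TwoSidedIdeal (PathAlg K V A s t)) : Prop :=
  ∀ a : A,
    (∀ b b' : A, arrow K V A s t a * arrow K V A s t b ∉ I →
      arrow K V A s t a * arrow K V A s t b' ∉ I → b = b') ∧
    (∀ c c' : A, arrow K V A s t c * arrow K V A s t a ∉ I →
      arrow K V A s t c' * arrow K V A s t a ∉ I → c = c')

/-- `σ : Q₁ → Q₁ ∪ {⋄}` (with `⋄ = none`): `σ a = some b` iff `ab ∉ I`. -/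
def SigmaSpec (I : TwoSidedIdeal (PathAlg K V A s t)) (σ : A → Option A) : Prop :=
  ∀ a b : A, σ a = some b ↔ arrow K V A s t a * arrow K V A s t b ∉ I

/-- `τ : Q₁ → Q₁ ∪ {⋄}` (with `⋄ = none`): `τ a = some c` iff `ca ∉ I`. -/
def TauSpec (I : TwoSidedIdeal (PathAlg K V A s t)) (τ : A → Option A) : Prop :=
  ∀ a c : A, τ a = some c ↔ arrow K V A s t c * arrow K V A s t a ∉ I

end

/-- Iterate of `σ` (extended to `Q₁ ∪ {⋄}` by `σ(⋄) = ⋄`) applied to an arrow: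
`OIter σ n a = σⁿ(a)`. -/
def OIter {A : Type} (σ : A → Option A) (n : ℕ) (a : A) : Option A :=
  (fun o => o.bind σ)^[n] (some a)

/-- A `(σ,τ)`-maximal path `a₁ ⋯ a_r`: `σ(aᵢ) = a_{i+1}`, `σ(a_r) = ⋄`,
`τ(a₁) = ⋄`. -/
def IsMaximalPath {A : Type} (σ τ : A → Option A) (l : List A) : Prop :=
  l ≠ [] ∧ l.Chain' (fun x y => σ x = some y) ∧
    (∀ x ∈ l.getLast?, σ x = none) ∧ (∀ x ∈ l.head?, τ x = none)

/-- The cycle `C_a = a σ(a) ⋯ σ^{m̂_a−1}(a)`, where `m̂_a` is the least positive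
integer with `σ^{m̂_a}(a) = a`:  `l` has entries the iterates of `σ` at `a` and
length the least positive return time of `a` under `σ`. -/
def IsSigmaCycleOf {A : Type} (σ : A → Option A) (a : A) (l : List A) : Prop :=
  l ≠ [] ∧ (∀ i : ℕ, i < l.length → l[i]? = OIter σ i a) ∧
    OIter σ l.length a = some a ∧
    ∀ k : ℕ, 0 < k → k < l.length → OIter σ k a ≠ some a

/-- A list of arrows is composable (i.e. a genuine path) if the target of each
arrow is the source of the next. -/
def Composable {V A : Type} (s t : A → V) (l : List A) : Prop :=
  l.Chain' (fun a b => t a = s b)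

/-- A simple cycle: a nonempty path with the same start and end vertex and no
repeated arrows. -/
def IsSimpleCycle {V A : Type} (s t : A → V) (l : List A) : Prop :=
  l ≠ [] ∧ Composable s t l ∧ (∀ x ∈ l.head?, ∀ y ∈ l.getLast?, t y = s x) ∧ l.Nodup

/-- The path `C^m` for a cycle `C`. -/
def cyclePow {A : Type} (l : List A) (m : ℕ) : List A := (List.replicate m l).flatten

/-- A defining pair `(𝒮, μ)` in the quiver `Q`: a set `𝒮` of simple cycles and
`μ : 𝒮 → ℤ_{>0}` satisfying (D0)–(D4). -/
def IsDefiningPair {V A : Type} (s t : A → V) (S : Set (List A)) (μ : List A → ℕ) : Prop :=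
  (∀ l ∈ S, IsSimpleCycle s t l) ∧
  (∀ l ∈ S, 0 < μ l) ∧
  (∀ l ∈ S, l.length = 1 → 1 < μ l) ∧
  (∀ l ∈ S, ∀ l' : List A, l.IsRotated l' → l' ∈ S) ∧
  (∀ l ∈ S, ∀ l' ∈ S, l.IsRotated l' → μ l = μ l') ∧
  (∀ a : A, ∃ l ∈ S, a ∈ l) ∧
  (∀ l ∈ S, ∀ l' ∈ S, (∃ a : A, a ∈ l ∧ a ∈ l') → l.IsRotated l')

/-- The set of relations of Types 1, 2 and 3 attached to a defining pair:
Type 1: `C^{μ(C)} − C'^{μ(C')}` for `C, C' ∈ 𝒮` cycles at the same vertex;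
Type 2: `C^{μ(C)} a` for `C ∈ 𝒮` with first arrow `a`;
Type 3: `ab` for arrows `a, b` with `ab` not a subpath of any `C^s`, `C ∈ 𝒮`. -/
def RelSet (K V A : Type) [Field K] [Fintype V] [DecidableEq V] (s t : A → V)
    (S : Set (List A)) (μ : List A → ℕ) : Set (PathAlg K V A s t) :=
  {x | ∃ l ∈ S, ∃ l' ∈ S, ∃ a ∈ l.head?, ∃ a' ∈ l'.head?, s a = s a' ∧
      x = pathElem K V A s t (cyclePow l (μ l)) - pathElem K V A s t (cyclePow l' (μ l'))} ∪
  {x | ∃ l ∈ S, ∃ a ∈ l.head?, x = pathElem K V A s t (cyclePow l (μ l) ++ [a])} ∪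
  {x | ∃ a b : A, x = arrow K V A s t a * arrow K V A s t b ∧
      ∀ l ∈ S, ∀ m : ℕ, ¬ [a, b] <:+: cyclePow l m}

/-- The ideal of relations of a defining pair. -/
def DefIdeal (K V A : Type) [Field K] [Fintype V] [DecidableEq V] (s t : A → V)
    (S : Set (List A)) (μ : List A → ℕ) : TwoSidedIdeal (PathAlg K V A s t) :=
  TwoSidedIdeal.span (RelSet K V A s t S μ)

/-- The relation whose `RingQuot` is the algebra `KQ/I` defined by a defining
pair, `I` generated by the Type 1, 2, 3 relations. -/
def QRel (K V A : Type) [Field K] [Fintype V] [DecidableEq V] (s t : A → V)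
    (S : Set (List A)) (μ : List A → ℕ) :
    PathAlg K V A s t → PathAlg K V A s t → Prop :=
  fun x y => x ∈ RelSet K V A s t S μ ∧ y = 0

/-! Vertices and paths span `KQ`, so it suffices to check `f(xy) = f(yx)` on them. For paths,
`pq` and `qp` are rotations of each other, and the powers `C^{μ(C)}`, `C ∈ 𝒮`, are closed under
rotation by (D1) and (D2); so `f` is rotation invariant on paths. Against a vertex `e`, the
products `e p` and `p e` differ only when `p` is not a closed path, and then `f(p) = 0`. -/

section CyclePow

variable {α : Type}

@[simp]
theorem cyclePow_zero (l : List α) : cyclePow l 0 = [] := rfl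

theorem cyclePow_succ (l : List α) (m : ℕ) : cyclePow l (m + 1) = l ++ cyclePow l m := by
  simp [cyclePow, List.replicate_succ]

theorem cyclePow_add (l : List α) (m n : ℕ) :
    cyclePow l (m + n) = cyclePow l m ++ cyclePow l n := by
  simp only [cyclePow, List.replicate_add, List.flatten_append]

theorem head?_cyclePow_succ (l : List α) (m : ℕ) : (cyclePow l (m + 1)).head? = l.head? := by
  rcases l with _ | ⟨a, l⟩
  · simp [cyclePow]
  · simp [cyclePow_succ]

theorem cyclePow_append_succ (D T : List α) (k : ℕ) :
    cyclePow (D ++ T) (k + 1) = D ++ (cyclePow (T ++ D) k ++ T) := by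
  induction k with
  | zero => simp [cyclePow]
  | succ k ih => simp [cyclePow_succ _ (k + 1), ih, cyclePow_succ (T ++ D) k]

theorem cyclePow_rotate_one (l : List α) (m : ℕ) :
    (cyclePow l m).rotate 1 = cyclePow (l.rotate 1) m := by
  rcases m with _ | k
  · simp [cyclePow]
  rcases l with _ | ⟨a, D⟩
  · simp [cyclePow]
  simpa [cyclePow_succ] using (cyclePow_append_succ D [a] k).symm

theorem cyclePow_rotate (l : List α) (m n : ℕ) :
    (cyclePow l m).rotate n = cyclePow (l.rotate n) m := by
  induction n with
  | zero => simp
  | succ n ih => rw [← List.rotate_rotate, ih, cyclePow_rotate_one, List.rotate_rotate]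

end CyclePow

section Composable

variable {V A : Type} {s t : A → V}

theorem Composable.cyclePow {l : List A} (hl : Composable s t l)
    (hclosed : ∀ a ∈ l.head?, ∀ b ∈ l.getLast?, t b = s a) (m : ℕ) :
    Composable s t (cyclePow l m) := by
  induction m with
  | zero => exact List.isChain_nil
  | succ m ih =>
    refine cyclePow_succ l m ▸ List.isChain_append.2 ⟨hl, ih, fun b hb a ha => ?_⟩
    rcases m with _ | m
    · simp at ha
    · exact hclosed a (head?_cyclePow_succ l m ▸ ha) b hb

theorem Composable.closed_of_append_self {l : List A} (hl : Composable s t (l ++ l)) :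
    ∀ a ∈ l.head?, ∀ b ∈ l.getLast?, t b = s a :=
  fun a ha b hb => (List.isChain_append.1 hl).2.2 b hb a ha

end Composable

def definingPowers {A : Type} (S : Set (List A)) (μ : List A → ℕ) : Set (List A) :=
  {l | ∃ C ∈ S, l = cyclePow C (μ C)}

namespace IsDefiningPair

variable {V A : Type} {s t : A → V} {S : Set (List A)} {μ : List A → ℕ}

theorem composable_cyclePow (hS : IsDefiningPair s t S μ) {C : List A} (hC : C ∈ S) (m : ℕ) :
    Composable s t (cyclePow C m) :=
  (hS.1 C hC).2.1.cyclePow (hS.1 C hC).2.2.1 m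

theorem composable_of_mem_definingPowers (hS : IsDefiningPair s t S μ) {l : List A}
    (hl : l ∈ definingPowers S μ) : Composable s t l := by
  obtain ⟨C, hC, rfl⟩ := hl
  exact hS.composable_cyclePow hC _

theorem closed_of_mem_definingPowers (hS : IsDefiningPair s t S μ) {l : List A}
    (hl : l ∈ definingPowers S μ) : ∀ a ∈ l.head?, ∀ b ∈ l.getLast?, t b = s a := by
  obtain ⟨C, hC, rfl⟩ := hl
  exact Composable.closed_of_append_self (cyclePow_add C _ _ ▸ hS.composable_cyclePow hC _)

theorem mem_definingPowers_of_isRotated (hS : IsDefiningPair s t S μ) {l l' : List A}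
    (hl : l ∈ definingPowers S μ) (h : l ~r l') : l' ∈ definingPowers S μ := by
  obtain ⟨C, hC, rfl⟩ := hl
  obtain ⟨n, rfl⟩ := h
  have hCn : C.rotate n ∈ S := hS.2.2.2.1 C hC _ ⟨n, rfl⟩
  exact ⟨C.rotate n, hCn, by rw [cyclePow_rotate, hS.2.2.2.2.1 C hC _ hCn ⟨n, rfl⟩]⟩

theorem mem_definingPowers_congr (hS : IsDefiningPair s t S μ) {l l' : List A} (h : l ~r l') :
    l ∈ definingPowers S μ ↔ l' ∈ definingPowers S μ :=
  ⟨fun hl => hS.mem_definingPowers_of_isRotated hl h,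
    fun hl' => hS.mem_definingPowers_of_isRotated hl' h.symm⟩

end IsDefiningPair

theorem LinearMap.map_mul_comm_of_span_eq_top {R A M : Type*} [CommSemiring R] [Semiring A]
    [Algebra R A] [AddCommMonoid M] [Module R M] (f : A →ₗ[R] M) {B : Set A}
    (hB : Submodule.span R B = ⊤) (h : ∀ x ∈ B, ∀ y ∈ B, f (x * y) = f (y * x)) (x y : A) :
    f (x * y) = f (y * x) := by
  have : (LinearMap.mul R A).compr₂ f = ((LinearMap.mul R A).compr₂ f).flip :=
    LinearMap.ext_on hB fun x hx => LinearMap.ext_on hB fun y hy => h x hx y hy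
  exact LinearMap.congr_fun₂ this x y

section PathAlg

variable {K V A : Type} [Field K] [Fintype V] [DecidableEq V] {s t : A → V}

theorem vtx_mul_vtx (v w : V) :
    vtx K V A s t v * vtx K V A s t w = if v = w then vtx K V A s t v else 0 := by
  rw [vtx, vtx, ← map_mul, RingQuot.mkAlgHom_rel K (PathRel.vtxMul v w)]
  split <;> simp

theorem vtx_source_mul_arrow (a : A) :
    vtx K V A s t (s a) * arrow K V A s t a = arrow K V A s t a := by
  rw [vtx, arrow, ← map_mul, RingQuot.mkAlgHom_rel K (PathRel.src a)]

theorem arrow_mul_vtx_target (a : A) :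
    arrow K V A s t a * vtx K V A s t (t a) = arrow K V A s t a := by
  rw [vtx, arrow, ← map_mul, RingQuot.mkAlgHom_rel K (PathRel.tgt a)]

theorem vtx_mul_arrow (v : V) (a : A) :
    vtx K V A s t v * arrow K V A s t a = if v = s a then arrow K V A s t a else 0 := by
  rw [← vtx_source_mul_arrow a, ← mul_assoc, vtx_mul_vtx]
  split <;> simp_all

theorem arrow_mul_vtx (a : A) (v : V) :
    arrow K V A s t a * vtx K V A s t v = if v = t a then arrow K V A s t a else 0 := by
  rw [← arrow_mul_vtx_target a, mul_assoc, vtx_mul_vtx]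
  split <;> simp_all [eq_comm]

theorem arrow_mul_arrow_of_ne {a b : A} (h : t a ≠ s b) :
    arrow K V A s t a * arrow K V A s t b = 0 := by
  rw [← vtx_source_mul_arrow b, ← mul_assoc, arrow_mul_vtx, if_neg h.symm, zero_mul]

@[simp]
theorem pathElem_nil : pathElem K V A s t [] = 1 := rfl

theorem pathElem_cons (a : A) (l : List A) :
    pathElem K V A s t (a :: l) = arrow K V A s t a * pathElem K V A s t l := by
  simp [pathElem]

theorem pathElem_singleton (a : A) : pathElem K V A s t [a] = arrow K V A s t a := by
  simp [pathElem]

theorem pathElem_append (l l' : List A) :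
    pathElem K V A s t (l ++ l') = pathElem K V A s t l * pathElem K V A s t l' := by
  simp [pathElem]

theorem pathElem_of_not_composable {l : List A} (h : ¬ Composable s t l) :
    pathElem K V A s t l = 0 := by
  induction l with
  | nil => exact absurd List.isChain_nil h
  | cons a l ih =>
    rcases l with _ | ⟨b, r⟩
    · exact absurd (List.isChain_singleton a) h
    rcases not_and_or.1 fun h' => h (List.isChain_cons_cons.2 h') with hab | hr
    · rw [pathElem_cons, pathElem_cons, ← mul_assoc, arrow_mul_arrow_of_ne hab, zero_mul]
    · rw [pathElem_cons, ih hr, mul_zero]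

theorem vtx_mul_pathElem {v : V} {a : A} {l : List A} (h : l.head? = some a) :
    vtx K V A s t v * pathElem K V A s t l = if v = s a then pathElem K V A s t l else 0 := by
  obtain ⟨l, rfl⟩ := List.head?_eq_some_iff.1 h
  rw [pathElem_cons, ← mul_assoc, vtx_mul_arrow]
  split <;> simp

theorem pathElem_mul_vtx {v : V} {b : A} {l : List A} (h : l.getLast? = some b) :
    pathElem K V A s t l * vtx K V A s t v = if v = t b then pathElem K V A s t l else 0 := by
  obtain ⟨l, rfl⟩ := List.getLast?_eq_some_iff.1 h
  rw [pathElem_append, pathElem_singleton, mul_assoc, arrow_mul_vtx]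
  split <;> simp

theorem span_vtx_union_pathElem_eq_top :
    Submodule.span K (Set.range (vtx K V A s t) ∪ Set.range (pathElem K V A s t)) = ⊤ := by
  set M := Submodule.span K (Set.range (vtx K V A s t) ∪ Set.range (pathElem K V A s t))
  have hvtx (v : V) : vtx K V A s t v ∈ M := Submodule.subset_span (Or.inl ⟨v, rfl⟩)
  have hpath (l : List A) : pathElem K V A s t l ∈ M := Submodule.subset_span (Or.inr ⟨l, rfl⟩)
  have hmul : M * M ≤ M := by
    rw [Submodule.span_mul_span, Submodule.span_le]
    rintro _ ⟨_, ⟨v, rfl⟩ | ⟨l, rfl⟩, _, ⟨w, rfl⟩ | ⟨l', rfl⟩, rfl⟩ <;> dsimp only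
    · rw [vtx_mul_vtx]; split <;> simp [hvtx]
    · rcases l' with _ | ⟨a, l'⟩
      · simpa using hvtx v
      · rw [vtx_mul_pathElem rfl]; split <;> simp [hpath]
    · rcases List.eq_nil_or_concat l with rfl | ⟨l, b, rfl⟩
      · simpa using hvtx w
      · rw [List.concat_eq_append, pathElem_mul_vtx (List.getLast?_concat ..)]
        split <;> simp [hpath]
    · rw [← pathElem_append]; exact hpath _
  let T := M.toSubalgebra (hpath []) fun x y hx hy => hmul (Submodule.mul_mem_mul hx hy)
  have hT : Algebra.adjoin K (Set.range (RingQuot.mkAlgHom K (PathRel K V A s t) ∘ ι K)) ≤ T := by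
    refine Algebra.adjoin_le ?_
    rintro _ ⟨v | a, rfl⟩
    · exact hvtx v
    · show arrow K V A s t a ∈ M
      rw [← pathElem_singleton]
      exact hpath [a]
  rw [Set.range_comp, ← AlgHom.map_adjoin, FreeAlgebra.adjoin_range_ι, Algebra.map_top,
    (AlgHom.range_eq_top _).2 (RingQuot.mkAlgHom_surjective K _)] at hT
  exact eq_top_iff.2 fun x _ => hT Algebra.mem_top

theorem apply_vtx_mul_pathElem_comm (f : PathAlg K V A s t →ₗ[K] K)
    (hclosed : ∀ l : List A, ∀ a ∈ l.head?, ∀ b ∈ l.getLast?, t b ≠ s a →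
      f (pathElem K V A s t l) = 0) (v : V) (l : List A) :
    f (vtx K V A s t v * pathElem K V A s t l) = f (pathElem K V A s t l * vtx K V A s t v) := by
  rcases l with _ | ⟨a, r⟩
  · simp
  have ha : (a :: r).head? = some a := rfl
  obtain ⟨b, hb⟩ : ∃ b, (a :: r).getLast? = some b := ⟨_, List.getLast?_eq_some_getLast (by simp)⟩
  rw [vtx_mul_pathElem ha, pathElem_mul_vtx hb]
  by_cases hab : t b = s a
  · rw [hab]
  · simp only [apply_ite f, hclosed _ a ha b hb hab, map_zero, ite_self]

theorem map_mul_comm_of_rotation_invariant (f : PathAlg K V A s t →ₗ[K] K)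
    (hrot : ∀ l l' : List A, l ~r l' → f (pathElem K V A s t l) = f (pathElem K V A s t l'))
    (hclosed : ∀ l : List A, ∀ a ∈ l.head?, ∀ b ∈ l.getLast?, t b ≠ s a →
      f (pathElem K V A s t l) = 0) (x y : PathAlg K V A s t) :
    f (x * y) = f (y * x) := by
  refine f.map_mul_comm_of_span_eq_top span_vtx_union_pathElem_eq_top ?_ x y
  rintro _ (⟨v, rfl⟩ | ⟨l, rfl⟩) _ (⟨w, rfl⟩ | ⟨l', rfl⟩)
  · rw [vtx_mul_vtx, vtx_mul_vtx]
    by_cases h : v = w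
    · rw [h]
    · rw [if_neg h, if_neg (Ne.symm h)]
  · exact apply_vtx_mul_pathElem_comm f hclosed v l'
  · exact (apply_vtx_mul_pathElem_comm f hclosed w l).symm
  · rw [← pathElem_append, ← pathElem_append]
    exact hrot _ _ List.isRotated_append

end PathAlg

theorem trace_form_symmetric_general
    (K V A : Type) [Field K] [Fintype V] [DecidableEq V] (s t : A → V)
    (S : Set (List A)) (μ : List A → ℕ) (hS : IsDefiningPair s t S μ)
    (f : PathAlg K V A s t →ₗ[K] K)
    (h1 : ∀ l : List A, Composable s t l → (∃ C ∈ S, l = cyclePow C (μ C)) →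
      f (pathElem K V A s t l) = 1)
    (h0 : ∀ l : List A, Composable s t l → l ≠ [] → (¬ ∃ C ∈ S, l = cyclePow C (μ C)) →
      f (pathElem K V A s t l) = 0) :
    ∀ x y : PathAlg K V A s t, f (x * y) = f (y * x) := by
  have hone : ∀ l ∈ definingPowers S μ, f (pathElem K V A s t l) = 1 :=
    fun l hl => h1 l (hS.composable_of_mem_definingPowers hl) hl
  have hzero : ∀ l, l ≠ [] → l ∉ definingPowers S μ → f (pathElem K V A s t l) = 0 := by
    intro l hl hP
    by_cases hc : Composable s t l
    · exact h0 l hc hl hP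
    · rw [pathElem_of_not_composable hc, map_zero]
  refine map_mul_comm_of_rotation_invariant f (fun l l' hrot => ?_) (fun l a ha b hb hab => ?_)
  · rcases eq_or_ne l [] with rfl | hl
    · rw [(List.isRotated_nil_iff'.1 hrot).symm]
    have hl' : l' ≠ [] := fun h => hl (List.isRotated_nil_iff.1 (h ▸ hrot))
    have hmem := hS.mem_definingPowers_congr hrot
    by_cases hP : l ∈ definingPowers S μ
    · rw [hone l hP, hone l' (hmem.1 hP)]
    · rw [hzero l hl hP, hzero l' hl' (hmem.not.1 hP)]
  · refine hzero l (by rintro rfl; simp at ha) fun hP => hab ?_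
    exact hS.closed_of_mem_definingPowers hP a ha b hb

/-- Let `(𝒮, μ)` be a defining pair and `f : KQ → K` the
linear map with `f(p) = 1` if `p = C^{μ(C)}` for some `C ∈ 𝒮` and `f(p) = 0`
for all other paths `p`.  Then `f(xy) = f(yx)` for all `x, y ∈ KQ`. -/
theorem trace_form_symmetric
    (K V A : Type) [Field K] [Fintype V] [DecidableEq V] [Fintype A] (s t : A → V)
    (S : Set (List A)) (μ : List A → ℕ) (hS : IsDefiningPair s t S μ)
    (f : PathAlg K V A s t →ₗ[K] K)
    (h1 : ∀ l : List A, Composable s t l → (∃ C ∈ S, l = cyclePow C (μ C)) →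
      f (pathElem K V A s t l) = 1)
    (h0 : ∀ l : List A, Composable s t l → l ≠ [] → (¬ ∃ C ∈ S, l = cyclePow C (μ C)) →
      f (pathElem K V A s t l) = 0)
    (hv : ∀ v : V, f (vtx K V A s t v) = 0) :
    ∀ x y : PathAlg K V A s t, f (x * y) = f (y * x) :=
  trace_form_symmetric_general K V A s t S μ hS f h1 h0
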